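/- Let h ≥ 2, let (W_i)_{i=0}^{h-1} be a partition of the nonnegative integers into nonempty pairwise disjoint sets, and let (g_i)_{i=0}^∞ be a G-adic sequence. Then the set A = ⋃_{i=0}^{h-1} A_G(W_i) is an asymptotic basis of order h, and its h-fold sumset is exactly the set of integers n with n ≥ h; that is, hA = {n ∈ ℕ₀ : n ≥ h}. -/

import Mathlib

open Finset

/-- A `𝒢`-adic sequence: strictly increasing, `g 0 = 1`, and `g i ∣ g (i+1)` for all `i`. -/
def GadicSeq (g : ℕ → ℕ) : Prop :=
  StrictMono g ∧ g 0 = 1 ∧ ∀ i, g i ∣ g (i + 1)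

/-- The set `A_𝒢(W)` of positive integers `∑_{j ∈ F} x j * g j` with `F` a nonempty finite
subset of `W` and `x j ∈ [1, d_{j+1} - 1]` where `d_{j+1} = g (j+1) / g j`. -/
def AG (g : ℕ → ℕ) (W : Set ℕ) : Set ℕ :=
  { n | ∃ (F : Finset ℕ) (x : ℕ → ℕ), F.Nonempty ∧ ↑F ⊆ W ∧
        (∀ j ∈ F, 1 ≤ x j ∧ x j ≤ g (j + 1) / g j - 1) ∧
        n = ∑ j ∈ F, x j * g j }

/-- `n` is a sum of `h` (not necessarily distinct) elements of `A`. -/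
def IsSumOf (A : Set ℕ) (h n : ℕ) : Prop :=
  ∃ f : Fin h → ℕ, (∀ i, f i ∈ A) ∧ n = ∑ i, f i

/-- `A` is an asymptotic basis of order `h`. -/
def AsympBasis (h : ℕ) (A : Set ℕ) : Prop :=
  ∃ N, ∀ n ≥ N, IsSumOf A h n

/-- `A` is a minimal asymptotic basis of order `h`. -/
def MinAsympBasis (h : ℕ) (A : Set ℕ) : Prop :=
  AsympBasis h A ∧ ∀ B ⊂ A, ¬ AsympBasis h B

/-!
Write `n` in the mixed radix `g` and collect the digits by the part `W i` containing their
position: this writes `n` as a sum of at most `h` elements of `A`, one per part. Every `a ∈ A`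
with `a ≥ 2` is the sum of two elements of `A` (split off one digit, split a digit `c ≥ 2` as
`1 + (c - 1)`, or write `g (m + 1) = (d - 1) g m + g m`), so the number of summands can be raised
one at a time as long as it is below `n`.
-/

def Splittable (A : Set ℕ) : Prop :=
  ∀ a ∈ A, 2 ≤ a → ∃ b ∈ A, ∃ c ∈ A, a = b + c

section Sumsets

variable {A : Set ℕ}

lemma le_of_isSumOf (hpos : ∀ a ∈ A, 0 < a) {h n : ℕ} (hn : IsSumOf A h n) : h ≤ n := by
  obtain ⟨f, hf, rfl⟩ := hn
  calc h = ∑ _i : Fin h, 1 := by simp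
    _ ≤ ∑ i, f i := Finset.sum_le_sum fun i _ => hpos _ (hf i)

lemma isSumOf_card_sum {M : Multiset ℕ} (hM : ∀ a ∈ M, a ∈ A) :
    IsSumOf A (Multiset.card M) M.sum := by
  induction M using Quotient.inductionOn with
  | h l => exact ⟨fun i => l[i.1], fun i => hM _ (List.getElem_mem _), (Fin.sum_univ_getElem l).symm⟩

lemma Splittable.exists_card_succ (hA : Splittable A) {M : Multiset ℕ} (hM : ∀ a ∈ M, a ∈ A)
    (hlt : Multiset.card M < M.sum) :
    ∃ M' : Multiset ℕ, Multiset.card M' = Multiset.card M + 1 ∧ (∀ a ∈ M', a ∈ A) ∧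
      M'.sum = M.sum := by
  obtain ⟨a, haM, ha⟩ : ∃ a ∈ M, 2 ≤ a := by
    by_contra! hsmall
    have := M.sum_le_card_nsmul 1 fun a ha => Nat.le_of_lt_succ (hsmall a ha)
    simp only [smul_eq_mul, mul_one] at this
    omega
  obtain ⟨b, hb, c, hc, rfl⟩ := hA a (hM a haM) ha
  refine ⟨b ::ₘ c ::ₘ M.erase (b + c), ?_, ?_, ?_⟩
  · have := Multiset.card_pos_iff_exists_mem.mpr ⟨_, haM⟩
    simp only [Multiset.card_cons, Multiset.card_erase_of_mem haM, Nat.pred_eq_sub_one]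
    omega
  · simp only [Multiset.mem_cons]
    rintro y (rfl | rfl | hy)
    exacts [hb, hc, hM y (Multiset.mem_of_mem_erase hy)]
  · rw [Multiset.sum_cons, Multiset.sum_cons, ← add_assoc, Multiset.sum_erase haM]

lemma Splittable.isSumOf (hA : Splittable A) {M : Multiset ℕ} (hM : ∀ a ∈ M, a ∈ A) {k : ℕ}
    (hcard : Multiset.card M ≤ k) (hk : k ≤ M.sum) : IsSumOf A k M.sum := by
  suffices ∃ M' : Multiset ℕ, Multiset.card M' = k ∧ (∀ a ∈ M', a ∈ A) ∧ M'.sum = M.sum by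
    obtain ⟨M', rfl, hM', hsum⟩ := this
    exact hsum ▸ isSumOf_card_sum hM'
  induction k, hcard using Nat.le_induction with
  | base => exact ⟨M, rfl, hM, rfl⟩
  | succ k _ ih =>
    obtain ⟨M', rfl, hM', hsum⟩ := ih (by omega)
    obtain ⟨M'', hcard, hM'', hsum'⟩ := hA.exists_card_succ hM' (by omega)
    exact ⟨M'', hcard, hM'', hsum'.trans hsum⟩

end Sumsets

namespace GadicSeq

variable {g : ℕ → ℕ}

lemma pos (hg : GadicSeq g) (j : ℕ) : 0 < g j := by
  have := hg.1.monotone (Nat.zero_le j)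
  rwa [hg.2.1] at this

lemma div_mul_cancel (hg : GadicSeq g) (j : ℕ) : g (j + 1) / g j * g j = g (j + 1) :=
  Nat.div_mul_cancel (hg.2.2 j)

lemma two_le_div (hg : GadicSeq g) (j : ℕ) : 2 ≤ g (j + 1) / g j := by
  have hlt : g j < g (j + 1) := hg.1 (Nat.lt_succ_self j)
  have hmul := hg.div_mul_cancel j
  by_contra! hd
  interval_cases g (j + 1) / g j <;> omega

lemma exists_digits (hg : GadicSeq g) (J : ℕ) {n : ℕ} (hn : n < g J) :
    ∃ (F : Finset ℕ) (x : ℕ → ℕ), F ⊆ Finset.range J ∧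
      (∀ j ∈ F, 1 ≤ x j ∧ x j ≤ g (j + 1) / g j - 1) ∧ n = ∑ j ∈ F, x j * g j := by
  induction J generalizing n with
  | zero => exact ⟨∅, 0, by simp, by simp, by rw [hg.2.1] at hn; simp; omega⟩
  | succ J ih =>
    obtain ⟨F, x, hFJ, hx, hr⟩ := ih (Nat.mod_lt n (hg.pos J))
    have hq : n / g J < g (J + 1) / g J := by
      rw [Nat.div_lt_iff_lt_mul (hg.pos J), hg.div_mul_cancel]
      exact hn
    have hJ : J ∉ F := fun hJ => by simpa using hFJ hJ
    have hsub : F ⊆ Finset.range (J + 1) := hFJ.trans (Finset.range_subset_range.mpr J.le_succ)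
    rcases Nat.eq_zero_or_pos (n / g J) with hq0 | hq0
    · refine ⟨F, x, hsub, hx, ?_⟩
      rw [← hr, Nat.mod_eq_of_lt ((Nat.div_eq_zero_iff_lt (hg.pos J)).mp hq0)]
    refine ⟨insert J F, Function.update x J (n / g J), Finset.insert_subset (by simp) hsub, ?_, ?_⟩
    · intro j hj
      rcases Finset.mem_insert.mp hj with rfl | hj
      · simp only [Function.update_self]
        omega
      · rw [Function.update_of_ne (ne_of_mem_of_not_mem hj hJ)]
        exact hx j hj
    · rw [Finset.sum_insert hJ, Function.update_self,
        Finset.sum_congr rfl fun j hj => by rw [Function.update_of_ne (ne_of_mem_of_not_mem hj hJ)],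
        ← hr, mul_comm, Nat.div_add_mod]

end GadicSeq

section AG

variable {g : ℕ → ℕ}

lemma pos_of_mem_AG (hg : GadicSeq g) {W : Set ℕ} {a : ℕ} (ha : a ∈ AG g W) : 0 < a := by
  obtain ⟨F, x, ⟨j, hj⟩, -, hx, rfl⟩ := ha
  exact (Nat.mul_pos (hx j hj).1 (hg.pos j)).trans_le
    (Finset.single_le_sum (f := fun j => x j * g j) (fun _ _ => Nat.zero_le _) hj)

lemma mul_mem_AG {W : Set ℕ} {j c : ℕ} (hj : j ∈ W) (hc : 1 ≤ c ∧ c ≤ g (j + 1) / g j - 1) :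
    c * g j ∈ AG g W :=
  ⟨{j}, fun _ => c, Finset.singleton_nonempty j, by simpa using hj, by simpa using hc, by simp⟩

variable {ι : Type*} {W : ι → Set ℕ}

lemma exists_add_eq_mul_of_two_le (hg : GadicSeq g) (hW : ∀ j, ∃ i, j ∈ W i) {i : ι} {j c : ℕ}
    (hj : j ∈ W i) (hc : 1 ≤ c ∧ c ≤ g (j + 1) / g j - 1) (h2 : 2 ≤ c * g j) :
    ∃ b ∈ ⋃ i, AG g (W i), ∃ b' ∈ ⋃ i, AG g (W i), c * g j = b + b' := by
  simp only [Set.mem_iUnion]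
  by_cases hc2 : 2 ≤ c
  · exact ⟨1 * g j, ⟨i, mul_mem_AG hj (by omega)⟩, (c - 1) * g j, ⟨i, mul_mem_AG hj (by omega)⟩,
      by rw [← add_mul]; congr 1; omega⟩
  obtain rfl : c = 1 := by omega
  obtain ⟨m, rfl⟩ : ∃ m, j = m + 1 := Nat.exists_eq_succ_of_ne_zero fun h0 => by
    simp [h0, hg.2.1] at h2
  obtain ⟨i', hm⟩ := hW m
  have hd := hg.two_le_div m
  refine ⟨(g (m + 1) / g m - 1) * g m, ⟨i', mul_mem_AG hm (by omega)⟩,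
    1 * g m, ⟨i', mul_mem_AG hm (by omega)⟩, ?_⟩
  rw [← add_mul, Nat.sub_add_cancel (by omega), hg.div_mul_cancel, one_mul]

lemma splittable_iUnion_AG (hg : GadicSeq g) (hW : ∀ j, ∃ i, j ∈ W i) :
    Splittable (⋃ i, AG g (W i)) := by
  intro a ha h2
  obtain ⟨i, F, x, ⟨j, hj⟩, hFW, hx, rfl⟩ := Set.mem_iUnion.mp ha
  by_cases hrest : (F.erase j).Nonempty
  · refine ⟨x j * g j, Set.mem_iUnion.mpr ⟨i, mul_mem_AG (hFW hj) (hx j hj)⟩,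
      ∑ k ∈ F.erase j, x k * g k, Set.mem_iUnion.mpr ⟨i, F.erase j, x, hrest,
        (Finset.coe_subset.mpr (F.erase_subset j)).trans hFW,
        fun k hk => hx k (Finset.mem_of_mem_erase hk), rfl⟩, (Finset.add_sum_erase F _ hj).symm⟩
  obtain rfl : F = {j} := by
    rw [Finset.not_nonempty_iff_eq_empty, Finset.erase_eq_empty_iff] at hrest
    exact hrest.resolve_left (Finset.ne_empty_of_mem hj)
  rw [Finset.sum_singleton] at h2 ⊢
  exact exists_add_eq_mul_of_two_le hg hW (hFW hj) (hx j hj) h2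

lemma exists_multiset_sum_eq [Fintype ι] (hg : GadicSeq g) (hW : ∀ j, ∃ i, j ∈ W i) (n : ℕ) :
    ∃ M : Multiset ℕ, Multiset.card M ≤ Fintype.card ι ∧ (∀ a ∈ M, a ∈ ⋃ i, AG g (W i)) ∧
      M.sum = n := by
  classical
  obtain ⟨F, x, -, hx, rfl⟩ := hg.exists_digits (n + 1) (hg.1.id_le (n + 1))
  choose part hpart using hW
  let digitsIn : ι → ℕ := fun i => ∑ j ∈ F with part j = i, x j * g j
  refine ⟨(F.image part).val.map digitsIn,
    (Multiset.card_map _ _).trans_le (Finset.card_le_univ _), ?_, ?_⟩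
  · simp only [Multiset.mem_map, Finset.mem_val, Finset.mem_image, Set.mem_iUnion]
    rintro _ ⟨_, ⟨j, hj, rfl⟩, rfl⟩
    exact ⟨part j, F.filter (fun k => part k = part j), x, ⟨j, Finset.mem_filter.mpr ⟨hj, rfl⟩⟩,
      fun k hk => (Finset.mem_filter.mp hk).2 ▸ hpart k,
      fun k hk => hx k (Finset.mem_filter.mp hk).1, rfl⟩
  · exact Finset.sum_fiberwise_of_maps_to (fun j hj => Finset.mem_image_of_mem part hj) _

end AG

theorem gadic_asymptotic_basis_general (h : ℕ) (g : ℕ → ℕ) (hg : GadicSeq g)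
    (W : Fin h → Set ℕ)
    (hW3 : ⋃ i, W i = Set.univ) :
    AsympBasis h (⋃ i, AG g (W i)) ∧
      {n : ℕ | IsSumOf (⋃ i, AG g (W i)) h n} = {n : ℕ | h ≤ n} := by
  have hW : ∀ j, ∃ i, j ∈ W i := Set.iUnion_eq_univ_iff.mp hW3
  have hpos : ∀ a ∈ ⋃ i, AG g (W i), 0 < a := fun a ha => by
    obtain ⟨i, hi⟩ := Set.mem_iUnion.mp ha
    exact pos_of_mem_AG hg hi
  have hsums : ∀ n, h ≤ n → IsSumOf (⋃ i, AG g (W i)) h n := fun n hn => by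
    obtain ⟨M, hcard, hM, rfl⟩ := exists_multiset_sum_eq hg hW n
    exact (splittable_iUnion_AG hg hW).isSumOf hM (by simpa using hcard) hn
  exact ⟨⟨h, hsums⟩, Set.ext fun n => ⟨le_of_isSumOf hpos, hsums n⟩⟩

theorem gadic_asymptotic_basis (h : ℕ) (hh : 2 ≤ h) (g : ℕ → ℕ) (hg : GadicSeq g)
    (W : Fin h → Set ℕ) (hW1 : ∀ i, (W i).Nonempty)
    (hW2 : ∀ i j, i ≠ j → Disjoint (W i) (W j))
    (hW3 : ⋃ i, W i = Set.univ) :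
    AsympBasis h (⋃ i, AG g (W i)) ∧
      {n : ℕ | IsSumOf (⋃ i, AG g (W i)) h n} = {n : ℕ | h ≤ n} :=
  gadic_asymptotic_basis_general h g hg W hW3
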